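/- arXiv:1003.3221 — 11 statements merged into one kernel-verified Lean document; each statement's English description precedes it below -/
import Mathlib

section
/- Let t : G ⟶ R be a natural transformation between endofunctors of a category A such that every component t_a is a monomorphism, and assume that R preserves equalisers. Then G preserves equalisers if and only if for every regular monomorphism i : a₀ → a in A, the square with sides G(i) : G(a₀) → G(a), t_{a₀} : G(a₀) → R(a₀), t_a : G(a) → R(a) and R(i) : R(a₀) → R(a) is a pullback. -/
/-!
Write `i` as the equaliser of `f, g : a ⟶ z`. If `G` preserves this equaliser, a map into
`G a` that becomes a map into `R a₀` after `t_a` is equalised by `G f, G g` (test this after the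
mono `t_z`, using naturality and `R i ≫ R f = R i ≫ R g`), so it factors through `G i`: the
square is a pullback. Conversely, if the square is a pullback, a fork `s` on `G f, G g` gives,
after `t_a`, a fork on `R f, R g`, which factors through the equaliser `R i`; the pullback then
factors `s` through `G i`, uniquely because `G i` is a pullback of the mono `R i`.
-/

open CategoryTheory CategoryTheory.Limits

namespace CategoryTheory.NatTrans

variable {C D : Type*} [Category C] [Category D] {G R : C ⥤ D} (t : G ⟶ R)
  {X Y Z : C} {ι : X ⟶ Y} {f g : Y ⟶ Z}

theorem isPullback_naturality_of_isLimit_mapCone_fork [Mono (t.app Z)] [Mono (R.map ι)]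
    (w : ι ≫ f = ι ≫ g) (hG : IsLimit (G.mapCone (Fork.ofι ι w))) :
    IsPullback (G.map ι) (t.app X) (t.app Y) (R.map ι) := by
  have hG' := isLimitMapConeForkEquiv G w hG
  have equalises : ∀ s : PullbackCone (t.app Y) (R.map ι),
      s.fst ≫ G.map f = s.fst ≫ G.map g := fun s => by
    rw [← cancel_mono (t.app Z)]
    simp only [Category.assoc, t.naturality, s.condition_assoc, ← R.map_comp, w]
  let lift (s : PullbackCone (t.app Y) (R.map ι)) : s.pt ⟶ G.obj X :=
    Fork.IsLimit.lift hG' s.fst (equalises s)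
  have lift_fst (s : PullbackCone (t.app Y) (R.map ι)) : lift s ≫ G.map ι = s.fst :=
    Fork.IsLimit.lift_ι' hG' _ _
  refine IsPullback.of_isLimit' ⟨t.naturality ι⟩ <|
    PullbackCone.IsLimit.mk _ lift lift_fst (fun s => ?_) (fun s m hm _ => ?_)
  · rw [← cancel_mono (R.map ι), Category.assoc, ← t.naturality, reassoc_of% lift_fst,
      s.condition]
  · have : Mono (G.map ι) := mono_of_isLimit_fork hG'
    exact (cancel_mono (G.map ι)).1 (hm.trans (lift_fst s).symm)

noncomputable def isLimitMapConeForkOfIsPullbackNaturality (w : ι ≫ f = ι ≫ g)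
    (hR : IsLimit (R.mapCone (Fork.ofι ι w)))
    (hsq : IsPullback (G.map ι) (t.app X) (t.app Y) (R.map ι)) :
    IsLimit (G.mapCone (Fork.ofι ι w)) := by
  have hR' := isLimitMapConeForkEquiv R w hR
  have : Mono (R.map ι) := mono_of_isLimit_fork hR'
  have : Mono (G.map ι) := hsq.mono_fst_of_mono
  have equalises : ∀ s : Fork (G.map f) (G.map g),
      (s.ι ≫ t.app Y) ≫ R.map f = (s.ι ≫ t.app Y) ≫ R.map g := fun s => by
    rw [Category.assoc, Category.assoc, ← t.naturality, ← t.naturality, s.condition_assoc]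
  let liftR (s : Fork (G.map f) (G.map g)) : s.pt ⟶ R.obj X :=
    Fork.IsLimit.lift hR' _ (equalises s)
  have liftR_map (s : Fork (G.map f) (G.map g)) : liftR s ≫ R.map ι = s.ι ≫ t.app Y :=
    Fork.IsLimit.lift_ι' hR' _ _
  refine (isLimitMapConeForkEquiv G w).symm <| Fork.IsLimit.mk _
    (fun s => hsq.lift s.ι (liftR s) (liftR_map s).symm)
    (fun s => hsq.lift_fst _ _ _)
    (fun s m hm => (cancel_mono (G.map ι)).1 (hm.trans (hsq.lift_fst _ _ _).symm))

end CategoryTheory.NatTrans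

theorem CategoryTheory.Limits.preservesEqualizers_of_isLimit_mapCone_fork
    {C D : Type*} [Category C] [Category D] {F : C ⥤ D}
    (h : ∀ {X Y Z : C} {ι : X ⟶ Y} {f g : Y ⟶ Z} (w : ι ≫ f = ι ≫ g),
      IsLimit (Fork.ofι ι w) → IsLimit (F.mapCone (Fork.ofι ι w))) :
    PreservesLimitsOfShape WalkingParallelPair F where
  preservesLimit {K} := by
    suffices PreservesLimit (parallelPair (K.map .left) (K.map .right)) F from
      preservesLimit_of_iso_diagram F (diagramIsoParallelPair K).symm
    refine ⟨fun {c} hc => ⟨?_⟩⟩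
    let iso : c ≅ Fork.ofι (Fork.ι c) (Fork.condition c) := Fork.isoForkOfι c
    exact (h _ (hc.ofIsoLimit iso)).ofIsoLimit ((Cone.functoriality _ F).mapIso iso).symm

/-- **Proposition 2.3 (a)⇔(b).** Let `t : G ⟶ R` be a natural transformation between
endofunctors of `A` whose components are all monomorphisms, and assume `R` preserves
equalisers.  Then `G` preserves equalisers if and only if for every regular monomorphism
`i : a₀ ⟶ a` the naturality square of `t` at `i` is a pullback. -/
theorem prop_2_3_ab {A : Type*} [Category A] {G R : A ⥤ A} (t : G ⟶ R)
    [∀ a : A, Mono (t.app a)]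
    [PreservesLimitsOfShape WalkingParallelPair R] :
    PreservesLimitsOfShape WalkingParallelPair G ↔
      ∀ {a₀ a : A} (i : a₀ ⟶ a), RegularMono i →
        IsPullback (G.map i) (t.app a₀) (t.app a) (R.map i) := by
  constructor
  · intro _ a₀ a i hi
    have : Mono (R.map i) :=
      mono_of_isLimit_fork (isLimitForkMapOfIsLimit R hi.w hi.isLimit)
    exact t.isPullback_naturality_of_isLimit_mapCone_fork hi.w (isLimitOfPreserves G hi.isLimit)
  · intro hsq
    refine preservesEqualizers_of_isLimit_mapCone_fork fun w hι => ?_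
    exact t.isLimitMapConeForkOfIsPullbackNaturality w (isLimitOfPreserves R hι)
      (hsq _ ⟨_, _, _, w, hι⟩)
end

section
/- Let t : G ⟶ R be a natural transformation between endofunctors of a category A such that every component t_a is a monomorphism, assume that R preserves equalisers, that A admits pushouts, and that G preserves pushouts. Then G preserves equalisers if and only if G preserves regular monomorphisms (i.e. G sends every regular monomorphism to a regular monomorphism). -/
/-!
Let `e` be an equaliser of `f, g`. If `G e` is a regular monomorphism, it is the equaliser of
its cokernel pair, which is `G` applied to the cokernel pair `j₁, j₂` of `e` since `G` preserves
pushouts. So it suffices that every `k` into `G X` equalising `G f, G g` also equalises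
`G j₁, G j₂`. Composing with `t` turns `k` into a cone over `R f, R g`, which factors through
`R e` because `R` preserves equalisers; as `e ≫ j₁ = e ≫ j₂`, naturality gives
`k ≫ G j₁ ≫ t = k ≫ G j₂ ≫ t`, and `t` is monic.
-/

namespace CategoryTheory

open Limits

variable {C D : Type*} [Category C] [Category D]

def Limits.Fork.IsLimit.ofιOfEqualizes {X Y Z E : C} {f g : X ⟶ Y} {h₁ h₂ : X ⟶ Z} {m : E ⟶ X}
    (w : m ≫ f = m ≫ g) {hw : m ≫ h₁ = m ≫ h₂} (hm : IsLimit (Fork.ofι m hw))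
    (H : ∀ {W : C} (k : W ⟶ X), k ≫ f = k ≫ g → k ≫ h₁ = k ≫ h₂) :
    IsLimit (Fork.ofι m w) :=
  Fork.IsLimit.mk' _ fun s =>
    let ⟨l, hl⟩ := Fork.IsLimit.lift' hm s.ι (H s.ι s.condition)
    ⟨l, hl, fun hl' => Fork.IsLimit.hom_ext hm (hl'.trans hl.symm)⟩

def RegularMono.isLimitCokernelPair {X Y Z : C} {m : X ⟶ Y} (hm : RegularMono m)
    {j₁ j₂ : Y ⟶ Z} (w : m ≫ j₁ = m ≫ j₂) (hp : IsColimit (PushoutCocone.mk j₁ j₂ w)) :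
    IsLimit (Fork.ofι m w) :=
  Fork.IsLimit.ofιOfEqualizes w hm.isLimit fun k hk => by
    obtain ⟨u, hu₁, hu₂⟩ : ∃ u : Z ⟶ hm.Z, j₁ ≫ u = hm.left ∧ j₂ ≫ u = hm.right :=
      let ⟨u, hu⟩ := PushoutCocone.IsColimit.desc' hp hm.left hm.right hm.w
      ⟨u, hu⟩
    rw [← hu₁, ← hu₂, reassoc_of% hk]

variable {G R : C ⥤ D}

lemma comp_map_eq_comp_map_of_isLimit_fork (t : G ⟶ R) [∀ a : C, Mono (t.app a)]
    {X Y E W : C} {f g : X ⟶ Y} {e : E ⟶ X} (w : e ≫ f = e ≫ g)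
    [PreservesLimit (parallelPair f g) R] (he : IsLimit (Fork.ofι e w))
    {h₁ h₂ : X ⟶ W} (hh : e ≫ h₁ = e ≫ h₂) {S : D} (k : S ⟶ G.obj X)
    (hk : k ≫ G.map f = k ≫ G.map g) : k ≫ G.map h₁ = k ≫ G.map h₂ := by
  have hkt : (k ≫ t.app X) ≫ R.map f = (k ≫ t.app X) ≫ R.map g := by
    simp only [Category.assoc, ← NatTrans.naturality, reassoc_of% hk]
  obtain ⟨l, hl⟩ := Fork.IsLimit.lift' (isLimitForkMapOfIsLimit R w he) _ hkt
  rw [Fork.ι_ofι] at hl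
  rw [← cancel_mono (t.app W)]
  simp only [Category.assoc, NatTrans.naturality, ← reassoc_of% hl, ← R.map_comp, hh]

noncomputable def isLimitForkMapOfRegularMonoMap (t : G ⟶ R) [∀ a : C, Mono (t.app a)]
    {X Y E : C} {f g : X ⟶ Y} {e : E ⟶ X} (w : e ≫ f = e ≫ g)
    [PreservesLimit (parallelPair f g) R] [HasPushout e e] [PreservesColimit (span e e) G]
    (he : IsLimit (Fork.ofι e w)) (hGe : RegularMono (G.map e)) :
    IsLimit (Fork.ofι (G.map e) (by simp only [← G.map_comp, w]) :
      Fork (G.map f) (G.map g)) :=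
  Fork.IsLimit.ofιOfEqualizes _
    (hGe.isLimitCokernelPair _
      (isColimitPushoutCoconeMapOfIsColimit G pushout.condition (pushoutIsPushout e e)))
    fun k hk => comp_map_eq_comp_map_of_isLimit_fork t w he pushout.condition k hk

lemma preservesLimit_parallelPair_of_regularMono_map (t : G ⟶ R) [∀ a : C, Mono (t.app a)]
    {X Y : C} (f g : X ⟶ Y) [PreservesLimit (parallelPair f g) R] [HasPushouts C]
    [PreservesColimitsOfShape WalkingSpan G]
    (H : ∀ {E : C} (e : E ⟶ X), RegularMono e → Nonempty (RegularMono (G.map e))) :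
    PreservesLimit (parallelPair f g) G where
  preserves {c} hc :=
    have hι : IsLimit (Fork.ofι (Fork.ι c) (Fork.condition c)) :=
      hc.ofIsoLimit (Fork.isoForkOfι c)
    have hGι := (H _ (Fork.IsLimit.regularMono hc)).some
    ⟨((isLimitMapConeForkEquiv G (Fork.condition c)).symm
        (isLimitForkMapOfRegularMonoMap t (Fork.condition c) hι hGι)).ofIsoLimit
      ((Cone.functoriality _ G).mapIso (Fork.isoForkOfι c).symm)⟩

end CategoryTheory

open CategoryTheory CategoryTheory.Limits

/-- **Proposition 2.3 (a)⇔(c).** Let `t : G ⟶ R` be a natural transformation between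
endofunctors of `A` whose components are all monomorphisms, assume `R` preserves
equalisers, `A` admits pushouts and `G` preserves pushouts.  Then `G` preserves
equalisers if and only if `G` takes every regular monomorphism to a regular
monomorphism. -/
theorem prop_2_3_ac {A : Type*} [Category A] {G R : A ⥤ A} (t : G ⟶ R)
    [∀ a : A, Mono (t.app a)]
    [PreservesLimitsOfShape WalkingParallelPair R]
    [HasPushouts A]
    [PreservesColimitsOfShape WalkingSpan G] :
    PreservesLimitsOfShape WalkingParallelPair G ↔
      ∀ {a₀ a : A} (i : a₀ ⟶ a), RegularMono i → Nonempty (RegularMono (G.map i)) := by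
  refine ⟨fun _ _ _ i hi => ⟨Fork.IsLimit.regularMono (isLimitForkMapOfIsLimit G hi.w hi.isLimit)⟩,
    fun H => ⟨fun {K} => ?_⟩⟩
  have := preservesLimit_parallelPair_of_regularMono_map t (K.map .left) (K.map .right) H
  exact preservesLimit_of_iso_diagram G (diagramIsoParallelPair K).symm
end

section
/- Let P = (T, G, σ) be a pairing between a monad T and a comonad G on a category A, let t : T' ⟶ T be a morphism of monads, and let P' = (T', G, σ') be the induced pairing with σ'_a = σ_a ∘ t_{G(a)}. If P is rational and every component t_a of t is an epimorphism, then P' is rational. -/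
open CategoryTheory

universe v u

variable {A : Type u} [Category.{v} A]

/-- A **pairing** `(T, G, σ)` between a monad `T = (T, m, e)` and a comonad
`G = (G, δ, ε)` on a category `A` is a natural transformation `σ : TG ⟶ Id`
(with components `σ_a : T(G(a)) ⟶ a`) such that for every object `a`:
`σ_a ∘ e_{G(a)} = ε_a` and `σ_a ∘ m_{G(a)} = σ_a ∘ T(σ_{G(a)}) ∘ T²(δ_a)`. -/
def IsPairing (T : Monad A) (G : Comonad A)
    (σ : G.toFunctor ⋙ T.toFunctor ⟶ 𝟭 A) : Prop :=
  (∀ a : A, T.η.app (G.obj a) ≫ σ.app a = G.ε.app a) ∧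
  (∀ a : A, T.μ.app (G.obj a) ≫ σ.app a =
      T.map (T.map (G.δ.app a)) ≫ T.map (σ.app (G.obj a)) ≫ σ.app a)

/-- A pairing is **rational** if all the maps
`β_{a,b} : Hom(a, G(b)) → Hom(T(a), b)`, `f ↦ σ_b ∘ T(f)`, are injective. -/
def IsRationalPairing (T : Monad A) (G : Comonad A)
    (σ : G.toFunctor ⋙ T.toFunctor ⟶ 𝟭 A) : Prop :=
  ∀ a b : A, Function.Injective (fun f : a ⟶ G.obj b => T.map f ≫ σ.app b)

theorem NatTrans.injective_map_comp_app_comp {C D : Type*} [Category C] [Category D]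
    {F T : C ⥤ D} (t : F ⟶ T) {a c : C} {d : D} (s : T.obj c ⟶ d) [Epi (t.app a)]
    (hs : Function.Injective fun f : a ⟶ c => T.map f ≫ s) :
    Function.Injective fun f : a ⟶ c => F.map f ≫ t.app c ≫ s := by
  intro f g hfg
  apply hs
  apply (cancel_epi (t.app a)).mp
  simpa only [NatTrans.naturality_assoc] using hfg

theorem rational_of_monadHom_epi_general (T T' : Monad A) (G : Comonad A)
    (σ : G.toFunctor ⋙ T.toFunctor ⟶ 𝟭 A)
    (hrat : IsRationalPairing T G σ)
    (t : T' ⟶ T) (hepi : ∀ a : A, Epi (t.toNatTrans.app a)) :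
    IsRationalPairing T' G (Functor.whiskerLeft G.toFunctor t.toNatTrans ≫ σ) := fun a b =>
  have := hepi a
  NatTrans.injective_map_comp_app_comp t.toNatTrans (σ.app b) (hrat a b)

/-- **3.3(ii).** If `P = (T, G, σ)` is a rational pairing, `t : T' ⟶ T` is a
morphism of monads all of whose components are epimorphisms, then the induced
pairing `P' = (T', G, σ')` with `σ'_a = σ_a ∘ t_{G(a)}` is also rational. -/
theorem rational_of_monadHom_epi (T T' : Monad A) (G : Comonad A)
    (σ : G.toFunctor ⋙ T.toFunctor ⟶ 𝟭 A)
    (hP : IsPairing T G σ) (hrat : IsRationalPairing T G σ)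
    (t : T' ⟶ T) (hepi : ∀ a : A, Epi (t.toNatTrans.app a)) :
    IsRationalPairing T' G (Functor.whiskerLeft G.toFunctor t.toNatTrans ≫ σ) :=
  rational_of_monadHom_epi_general T T' G σ hrat t hepi
end

section
/- Let P = (T, G, σ) be a pairing between a monad T = (T, m, e) and a comonad G = (G, δ, ε) on a category A. If (a, θ_a) is a G-comodule (i.e. ε_a ∘ θ_a = id_a and δ_a ∘ θ_a = G(θ_a) ∘ θ_a), then the morphism h := σ_a ∘ T(θ_a) : T(a) → a makes (a, h) a T-module: h ∘ e_a = id_a and h ∘ m_a = h ∘ T(h). -/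
open CategoryTheory

universe v u

variable {A : Type u} [Category.{v} A]

/-- **3.6(1).** Let `P = (T, G, σ)` be a pairing.  If `(a, θ)` is a `G`-comodule,
i.e. `ε_a ∘ θ = id` and `δ_a ∘ θ = G(θ) ∘ θ`, then `h := σ_a ∘ T(θ)` makes
`(a, h)` a `T`-module: `h ∘ e_a = id` and `h ∘ m_a = h ∘ T(h)`. -/
theorem module_of_comodule (T : Monad A) (G : Comonad A)
    (σ : G.toFunctor ⋙ T.toFunctor ⟶ 𝟭 A) (hP : IsPairing T G σ)
    (a : A) (θ : a ⟶ G.obj a)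
    (hθ₁ : θ ≫ G.ε.app a = 𝟙 a)
    (hθ₂ : θ ≫ G.δ.app a = θ ≫ G.map θ) :
    T.η.app a ≫ (T.map θ ≫ σ.app a) = 𝟙 a ∧
    T.μ.app a ≫ (T.map θ ≫ σ.app a) =
      T.map (T.map θ ≫ σ.app a) ≫ (T.map θ ≫ σ.app a) := by
  obtain ⟨h1, h2⟩ := hP
  constructor
  · have hn : T.η.app a ≫ T.map θ = θ ≫ T.η.app (G.obj a) := (T.η.naturality θ).symm
    rw [← Category.assoc, hn, Category.assoc, h1, hθ₁]
  · have hn : T.μ.app a ≫ T.map θ = T.map (T.map θ) ≫ T.μ.app (G.obj a) :=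
      (T.μ.naturality θ).symm
    have hσ : T.map (G.map θ) ≫ σ.app (G.obj a) = σ.app a ≫ θ := σ.naturality θ
    calc T.μ.app a ≫ T.map θ ≫ σ.app a
        = T.map (T.map θ) ≫ T.μ.app (G.obj a) ≫ σ.app a := by
          rw [← Category.assoc, hn, Category.assoc]
      _ = T.map (T.map θ) ≫ T.map (T.map (G.δ.app a)) ≫ T.map (σ.app (G.obj a)) ≫ σ.app a := by
          rw [h2 a]
      _ = T.map (T.map (θ ≫ G.δ.app a)) ≫ T.map (σ.app (G.obj a)) ≫ σ.app a := by
          simp only [Functor.map_comp, Category.assoc]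
      _ = T.map (T.map (θ ≫ G.map θ)) ≫ T.map (σ.app (G.obj a)) ≫ σ.app a := by rw [hθ₂]
      _ = T.map (T.map θ) ≫ T.map (T.map (G.map θ) ≫ σ.app (G.obj a)) ≫ σ.app a := by
          simp only [Functor.map_comp, Category.assoc]
      _ = T.map (T.map θ) ≫ T.map (σ.app a ≫ θ) ≫ σ.app a := by rw [hσ]
      _ = T.map (T.map θ ≫ σ.app a) ≫ T.map θ ≫ σ.app a := by
          simp [Functor.map_comp]
end

section
/- Let P = (T, G, σ) be a rational pairing between a monad T = (T, m, e) and a comonad G = (G, δ, ε) on a category A, and let (a, θ_a) and (b, θ_b) be G-comodules. If a morphism f : a → b satisfies f ∘ σ_a ∘ T(θ_a) = σ_b ∘ T(θ_b) ∘ T(f) (i.e. f is a morphism of the induced T-modules), then G(f) ∘ θ_a = θ_b ∘ f (i.e. f is a morphism of G-comodules). Consequently the induced functor Φ^P from G-comodules to T-modules is full and faithful. -/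
open CategoryTheory

universe v u

variable {A : Type u} [Category.{v} A]

/-- **3.7(1).** Let `P = (T, G, σ)` be a *rational* pairing, and let `(a, θ_a)`,
`(b, θ_b)` be `G`-comodules.  If `f : a ⟶ b` is a morphism of the induced
`T`-modules, i.e. `f ∘ σ_a ∘ T(θ_a) = σ_b ∘ T(θ_b) ∘ T(f)`, then `f` is a
morphism of `G`-comodules: `G(f) ∘ θ_a = θ_b ∘ f`.  (Consequently the induced
functor `Φ^P : A^G → A_T` is full and faithful.) -/
theorem comoduleHom_of_moduleHom_of_rational (T : Monad A) (G : Comonad A)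
    (σ : G.toFunctor ⋙ T.toFunctor ⟶ 𝟭 A)
    (hP : IsPairing T G σ) (hrat : IsRationalPairing T G σ)
    {a b : A} (θa : a ⟶ G.obj a) (θb : b ⟶ G.obj b)
    (hθa₁ : θa ≫ G.ε.app a = 𝟙 a) (hθa₂ : θa ≫ G.δ.app a = θa ≫ G.map θa)
    (hθb₁ : θb ≫ G.ε.app b = 𝟙 b) (hθb₂ : θb ≫ G.δ.app b = θb ≫ G.map θb)
    (f : a ⟶ b)
    (hf : (T.map θa ≫ σ.app a) ≫ f = T.map f ≫ (T.map θb ≫ σ.app b)) :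
    f ≫ θb = θa ≫ G.map f := by
  apply hrat a b
  have hnat := σ.naturality f
  simp only [Functor.comp_map, Functor.id_map] at hnat
  simp only [Functor.map_comp, Category.assoc]
  rw [hnat]
  simp only [Category.assoc] at hf ⊢
  rw [← hf]
end

section
/- Let P = (T, G, σ) be a rational pairing between a monad T and a comonad G on a category A. Then the functor G preserves monomorphisms: for every monomorphism f : a → b in A, G(f) : G(a) → G(b) is a monomorphism. -/
open CategoryTheory

universe v u

variable {A : Type u} [Category.{v} A]

/-- **3.7(2).** If `P = (T, G, σ)` is a rational pairing on `A`, then the functor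
`G` preserves monomorphisms. -/
theorem comonad_preserves_mono_of_rational (T : Monad A) (G : Comonad A)
    (σ : G.toFunctor ⋙ T.toFunctor ⟶ 𝟭 A)
    (hP : IsPairing T G σ) (hrat : IsRationalPairing T G σ)
    {a b : A} (f : a ⟶ b) (hf : Mono f) :
    Mono (G.map f) := by
  constructor
  intro c g h hgh
  apply hrat c a
  apply (cancel_mono f).mp
  have nat : ∀ {x y : A} (u : x ⟶ y), T.map (G.map u) ≫ σ.app y = σ.app x ≫ u :=
    fun u => σ.naturality u
  simp only [Category.assoc, ← nat f, ← Functor.map_comp_assoc, hgh]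
end

section
/- Let T = (T, m, e) be a monad on a category A with an adjunction T ⊣ T^◊ (unit η̄, counit ε̄), and equip T^◊ with the comonad structure T^◊ = (T^◊, δ^◊, ε^◊) right adjoint to the monad T, i.e. ε^◊ : T^◊ ⟶ Id is the mate of e (explicitly ε^◊_a = ε̄_a ∘ e_{T^◊(a)}) and δ^◊ : T^◊ ⟶ T^◊T^◊ is the mate of m : TT ⟶ T under the adjunctions TT ⊣ T^◊T^◊ and T ⊣ T^◊. Let G = (G, δ, ε) be a comonad on A and σ : TG ⟶ Id a natural transformation. Then (T, G, σ) is a pairing (i.e. σ_a ∘ e_{G(a)} = ε_a and σ_a ∘ m_{G(a)} = σ_a ∘ T(σ_{G(a)}) ∘ T²(δ_a) for all a) if and only if χ(σ) : G ⟶ T^◊, with components χ(σ)_a = T^◊(σ_a) ∘ η̄_{G(a)}, is a morphism of comonads, i.e. ε^◊_a ∘ χ(σ)_a = ε_a and δ^◊_a ∘ χ(σ)_a = χ(σ)_{T^◊(a)} ∘ G(χ(σ)_a) ∘ δ_a for all a. -/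
open CategoryTheory

universe v u

variable {A : Type u} [Category.{v} A]

/-- **Proposition 3.14.** Let `T = (T, m, e)` be a monad on `A` with a right adjoint
`T◊` (adjunction `T ⊣ T◊`, unit `η̄`, counit `ε̄`), and equip `T◊` with the comonad
structure right adjoint to the monad `T`:  the counit `ε◊` is the mate of `e`
(`ε◊_a = ε̄_a ∘ e_{T◊(a)}`), and the comultiplication `δ◊` is the mate of
`m : TT ⟶ T` under the adjunctions `TT ⊣ T◊T◊` and `T ⊣ T◊`.  Then for a comonad
`G = (G, δ, ε)` and a natural transformation `σ : TG ⟶ Id`, the triple `(T, G, σ)`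
is a pairing if and only if `χ(σ) : G ⟶ T◊`, with components
`χ(σ)_a = T◊(σ_a) ∘ η̄_{G(a)}`, is a morphism of comonads. -/
theorem isPairing_iff_comonadHom (T : Monad A) (Td : A ⥤ A)
    (adj : T.toFunctor ⊣ Td)
    (εd : Td ⟶ 𝟭 A) (δd : Td ⟶ Td ⋙ Td)
    (hεd : ∀ a : A, εd.app a = T.η.app (Td.obj a) ≫ adj.counit.app a)
    (hδd : ∀ a : A, δd.app a =
      (adj.comp adj).unit.app (Td.obj a) ≫
        Td.map (Td.map (T.μ.app (Td.obj a))) ≫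
          Td.map (Td.map (adj.counit.app a)))
    (G : Comonad A) (σ : G.toFunctor ⋙ T.toFunctor ⟶ 𝟭 A) :
    IsPairing T G σ ↔
      ((∀ a : A,
          (adj.unit.app (G.obj a) ≫ Td.map (σ.app a)) ≫ εd.app a = G.ε.app a) ∧
       (∀ a : A,
          (adj.unit.app (G.obj a) ≫ Td.map (σ.app a)) ≫ δd.app a =
            G.δ.app a ≫ G.map (adj.unit.app (G.obj a) ≫ Td.map (σ.app a)) ≫
              (adj.unit.app (G.obj (Td.obj a)) ≫ Td.map (σ.app (Td.obj a))))) := by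
  -- abbreviation: χ a := adj.unit.app (G.obj a) ≫ Td.map (σ.app a)
  -- transpose back: T(χ a) ≫ counit = σ a
  have hsymm : ∀ a : A,
      T.toFunctor.map (adj.unit.app (G.obj a) ≫ Td.map (σ.app a)) ≫
        adj.counit.app a = σ.app a := by
    intro a
    have h := adj.counit_naturality (σ.app a)
    simp only [Functor.id_obj, Functor.comp_obj] at h
    simp only [Functor.map_comp, Category.assoc]
    rw [h]
    simp
  -- first condition
  have h1 : ∀ a : A,
      (adj.unit.app (G.obj a) ≫ Td.map (σ.app a)) ≫ εd.app a
        = T.η.app (G.obj a) ≫ σ.app a := by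
    intro a
    have n : (adj.unit.app (G.obj a) ≫ Td.map (σ.app a)) ≫ T.η.app (Td.obj a)
        = T.η.app (G.obj a) ≫
            T.toFunctor.map (adj.unit.app (G.obj a) ≫ Td.map (σ.app a)) := by
      have h := T.η.naturality (adj.unit.app (G.obj a) ≫ Td.map (σ.app a))
      simp only [Functor.id_obj, Functor.id_map] at h
      exact h
    rw [hεd, ← Category.assoc, n, Category.assoc, hsymm]
  -- δd as a transpose under the composed adjunction
  have hδd' : ∀ a : A, δd.app a
      = ((adj.comp adj).homEquiv (Td.obj a) a)
          (T.μ.app (Td.obj a) ≫ adj.counit.app a) := by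
    intro a
    rw [Adjunction.homEquiv_unit, hδd a]
    simp
  -- LHS of the second condition
  have hL : ∀ a : A,
      (adj.unit.app (G.obj a) ≫ Td.map (σ.app a)) ≫ δd.app a
        = ((adj.comp adj).homEquiv (G.obj a) a)
            (T.μ.app (G.obj a) ≫ σ.app a) := by
    intro a
    have key : T.μ.app (G.obj a) ≫ σ.app a
        = (T.toFunctor ⋙ T.toFunctor).map
            (adj.unit.app (G.obj a) ≫ Td.map (σ.app a)) ≫
            T.μ.app (Td.obj a) ≫ adj.counit.app a := by
      have h := T.μ.naturality (adj.unit.app (G.obj a) ≫ Td.map (σ.app a))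
      simp only [Functor.id_obj] at h
      rw [← Category.assoc, h, Category.assoc, hsymm]
    rw [key, Adjunction.homEquiv_naturality_left]
    simp only [Functor.id_obj]
    rw [← hδd' a]
  -- RHS of the second condition
  have hR : ∀ a : A,
      G.δ.app a ≫ G.map (adj.unit.app (G.obj a) ≫ Td.map (σ.app a)) ≫
          (adj.unit.app (G.obj (Td.obj a)) ≫ Td.map (σ.app (Td.obj a)))
        = ((adj.comp adj).homEquiv (G.obj a) a)
            (T.map (T.map (G.δ.app a)) ≫ T.map (σ.app (G.obj a)) ≫ σ.app a) := by
    intro a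
    have hχ : ∀ b : A, adj.unit.app (G.obj b) ≫ Td.map (σ.app b)
        = adj.homEquiv (G.obj b) b (σ.app b) := by
      intro b; rw [Adjunction.homEquiv_unit]
    have hnat : σ.app (G.obj a) ≫ adj.homEquiv (G.obj a) a (σ.app a)
        = T.toFunctor.map
            (G.map (adj.homEquiv (G.obj a) a (σ.app a))) ≫ σ.app (Td.obj a) := by
      have h := σ.naturality (adj.homEquiv (G.obj a) a (σ.app a))
      simp only [Functor.comp_map, Functor.id_map, Functor.id_obj] at h
      exact h.symm
    have step1 : T.map (T.map (G.δ.app a)) ≫ T.map (σ.app (G.obj a)) ≫ σ.app a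
        = T.toFunctor.map
            (T.toFunctor.map (G.δ.app a) ≫ σ.app (G.obj a)) ≫ σ.app a := by
      simp
    have step3 : T.toFunctor.map (G.δ.app a) ≫
          T.toFunctor.map (G.map (adj.homEquiv (G.obj a) a (σ.app a)))
        = T.toFunctor.map
            (G.δ.app a ≫ G.map (adj.homEquiv (G.obj a) a (σ.app a))) := by
      simp
    rw [Adjunction.comp_homEquiv]
    beta_reduce
    erw [Equiv.trans_apply]
    have E1 : (adj.homEquiv (T.obj (G.obj a)) a)
          (T.map (T.map (G.δ.app a)) ≫ T.map (σ.app (G.obj a)) ≫ σ.app a)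
        = (T.toFunctor.map (G.δ.app a) ≫ σ.app (G.obj a)) ≫
            adj.homEquiv (G.obj a) a (σ.app a) := by
      rw [step1]
      exact adj.homEquiv_naturality_left _ _
    have E2 : (T.toFunctor.map (G.δ.app a) ≫ σ.app (G.obj a)) ≫
          adj.homEquiv (G.obj a) a (σ.app a)
        = T.toFunctor.map
            (G.δ.app a ≫ G.map (adj.homEquiv (G.obj a) a (σ.app a))) ≫
            σ.app (Td.obj a) := by
      rw [Category.assoc, hnat, ← Category.assoc, step3]
    have E3 : (adj.homEquiv (G.obj a) (Td.obj a))
          (T.toFunctor.map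
            (G.δ.app a ≫ G.map (adj.homEquiv (G.obj a) a (σ.app a))) ≫
            σ.app (Td.obj a))
        = (G.δ.app a ≫ G.map (adj.homEquiv (G.obj a) a (σ.app a))) ≫
            adj.homEquiv (G.obj (Td.obj a)) (Td.obj a) (σ.app (Td.obj a)) :=
      adj.homEquiv_naturality_left _ _
    have final := (congrArg (adj.homEquiv (G.obj a) (Td.obj a))
      (E1.trans E2)).trans E3
    refine Eq.trans ?_ final.symm
    rw [hχ a, hχ (Td.obj a)]
    simp only [Category.assoc]
  constructor
  · rintro ⟨p1, p2⟩
    refine ⟨fun a => by rw [h1 a, p1 a], fun a => ?_⟩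
    rw [hL a, hR a, ← p2 a]
  · rintro ⟨q1, q2⟩
    refine ⟨fun a => by rw [← h1 a, q1 a], fun a => ?_⟩
    have h := q2 a
    rw [hL a, hR a] at h
    exact ((adj.comp adj).homEquiv (G.obj a) a).injective h
end

section
/- Let P = (T, G, σ) be a pairing between a monad T = (T, m, e) and a comonad G = (G, δ, ε) on a category A, and suppose T has a right adjoint T^◊ with adjunction unit η̄ : Id ⟶ T^◊T. Then the pairing P is rational (all maps β_{a,b} : Hom(a,G(b)) → Hom(T(a),b), f ↦ σ_b ∘ T(f), are injective) if and only if every component χ(σ)_a = T^◊(σ_a) ∘ η̄_{G(a)} : G(a) → T^◊(a) of χ(σ) is a monomorphism. -/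
open CategoryTheory

universe v u

variable {A : Type u} [Category.{v} A]

/-- **Proposition 3.16 (i)⇔(ii).** Let `P = (T, G, σ)` be a pairing on `A` and
suppose the monad `T` has a right adjoint `T◊` (adjunction with unit `η̄`).  Then
`P` is rational if and only if every component
`χ(σ)_a = T◊(σ_a) ∘ η̄_{G(a)} : G(a) ⟶ T◊(a)` is a monomorphism. -/
theorem rational_iff_chi_mono (T : Monad A) (Td : A ⥤ A)
    (adj : T.toFunctor ⊣ Td)
    (G : Comonad A) (σ : G.toFunctor ⋙ T.toFunctor ⟶ 𝟭 A)
    (hP : IsPairing T G σ) :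
    IsRationalPairing T G σ ↔
      ∀ a : A, Mono (adj.unit.app (G.obj a) ≫ Td.map (σ.app a)) := by
  have key : ∀ (a b : A) (f : a ⟶ G.obj b),
      adj.homEquiv a b (T.map f ≫ σ.app b) =
        f ≫ (adj.unit.app (G.obj b) ≫ Td.map (σ.app b)) := by
    intro a b f
    have nat := adj.unit.naturality f
    simp only [Functor.comp_map, Functor.id_map] at nat
    rw [Adjunction.homEquiv_apply, Functor.map_comp, ← Category.assoc, ← nat,
      Category.assoc]
  constructor
  · intro h b
    constructor
    intro a f g hfg
    apply h a b
    apply (adj.homEquiv a b).injective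
    simp only [key, hfg]
  · intro h a b f g hfg
    have heq := congrArg (adj.homEquiv a b) hfg
    rw [key, key] at heq
    haveI := h b
    exact (cancel_mono _).mp heq
end

section
/- Let V be a symmetric monoidal closed category, A = (A, m_A, e_A) a monoid and C = (C, δ_C, ε_C) a comonoid in V, and t : A ⊗ C → 𝟙 a left pairing, i.e. t ∘ (e_A ⊗ C) = ε_C (up to the unit isomorphism) and t ∘ (m_A ⊗ C) = t ∘ (A ⊗ t ⊗ C) ∘ (A ⊗ A ⊗ δ_C). For each object X let α_X : C ⊗ X → [A, X] be the transpose, under the adjunction A ⊗ − ⊣ [A, −], of the morphism A ⊗ C ⊗ X → X given by t ⊗ X (composed with the unit isomorphism), and let γ : C → A* = [A, 𝟙] be the transpose of t composed with the symmetry (i.e. the transpose of t ∘ τ_{C,A} : C ⊗ A → 𝟙). If α_X is a monomorphism for every object X of V, then γ is pure: γ ⊗ id_X : C ⊗ X → A* ⊗ X is a monomorphism for every object X of V. -/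
/-!
The transpose `α_X` of `t ⊗ X` factors as `(γ ⊗ X) ≫ m_X`, where `γ` is the transpose of `t`
(the symmetry in its definition cancels against itself) and `m_X : A* ⊗ X ⟶ [A, X]` is the
canonical map; so `γ ⊗ X` is a monomorphism whenever `α_X` is.
-/

open CategoryTheory MonoidalCategory MonoidalClosed

universe v u

namespace CategoryTheory.MonoidalClosed

variable {V : Type u} [Category.{v} V] [MonoidalCategory V] [MonoidalClosed V]

theorem curry_associator_inv_whiskerRight {A C X Y Z : V} (f : A ⊗ C ⟶ Y) (g : Y ⊗ X ⟶ Z) :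
    curry ((α_ A C X).inv ≫ (f ▷ X) ≫ g) =
      (curry f ▷ X) ≫ curry ((α_ A _ X).inv ≫ ((ihom.ev A).app Y ▷ X) ≫ g) := by
  rw [eq_comm, eq_curry_iff, uncurry_natural_left, uncurry_curry,
    associator_inv_naturality_middle_assoc, ← comp_whiskerRight_assoc, ← uncurry_eq,
    uncurry_curry]

end CategoryTheory.MonoidalClosed

theorem pure_of_rational_pairing_general {V : Type u} [Category.{v} V]
    [MonoidalCategory V] [SymmetricCategory V] [MonoidalClosed V]
    (M : Mon V) (Cn : Comon V) (t : M.X ⊗ Cn.X ⟶ 𝟙_ V)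
    (hmono : ∀ X : V,
      Mono (curry ((α_ M.X Cn.X X).inv ≫ (t ▷ X) ≫ (λ_ X).hom))) :
    ∀ X : V,
      Mono ((curry ((β_ M.X Cn.X).hom ≫ (β_ Cn.X M.X).hom ≫ t)) ▷ X) := by
  intro X
  have hα := hmono X
  rw [curry_associator_inv_whiskerRight] at hα
  rw [SymmetricCategory.symmetry_assoc]
  exact @mono_of_mono _ _ _ _ _ _ _ hα

/-- **Proposition 5.9(1).** Let `V` be a symmetric monoidal closed category, `A` a
monoid and `C` a comonoid in `V`, and `t : A ⊗ C ⟶ 𝟙` a left pairing, i.e.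
`t ∘ (e_A ⊗ C) = ε_C` and `t ∘ (m_A ⊗ C) = t ∘ (A ⊗ t ⊗ C) ∘ (A ⊗ A ⊗ δ_C)`.
For each `X` let `α_X : C ⊗ X ⟶ [A, X]` be the transpose of `(t ⊗ X)` (composed
with the structural isomorphisms), and let `γ : C ⟶ A* = [A, 𝟙]` be the transpose
of `t ∘ τ_{C,A}`.  If every `α_X` is a monomorphism, then `γ` is pure: every
`γ ⊗ id_X` is a monomorphism. -/
theorem pure_of_rational_pairing {V : Type u} [Category.{v} V]
    [MonoidalCategory V] [SymmetricCategory V] [MonoidalClosed V]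
    (M : Mon V) (Cn : Comon V) (t : M.X ⊗ Cn.X ⟶ 𝟙_ V)
    (h₁ : (λ_ Cn.X).inv ≫ (MonObj.one (X := M.X) ▷ Cn.X) ≫ t = ComonObj.counit (X := Cn.X))
    (h₂ : (MonObj.mul (X := M.X) ▷ Cn.X) ≫ t =
      ((M.X ⊗ M.X) ◁ ComonObj.comul (X := Cn.X)) ≫ (α_ M.X M.X (Cn.X ⊗ Cn.X)).hom ≫
        (M.X ◁ (α_ M.X Cn.X Cn.X).inv) ≫ (M.X ◁ (t ▷ Cn.X)) ≫
          (M.X ◁ (λ_ Cn.X).hom) ≫ t)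
    (hmono : ∀ X : V,
      Mono (curry ((α_ M.X Cn.X X).inv ≫ (t ▷ X) ≫ (λ_ X).hom))) :
    ∀ X : V,
      Mono ((curry ((β_ M.X Cn.X).hom ≫ (β_ Cn.X M.X).hom ≫ t)) ▷ X) :=
  pure_of_rational_pairing_general M Cn t hmono
end

section
/- Let (A, C, λ) be an entwining in a monoidal category V, and suppose the entwining is representable: there is an object E and a morphism β : E ⊗ C → A such that for every object V' and every morphism f : V' ⊗ C → A there exists a unique g : V' → E with (g ⊗ id_C) ≫ β = f. Let e_E : 𝟙 → E be the unique morphism with (e_E ⊗ id_C) ≫ β = e_A ∘ ε_C (composed with the unit isomorphism), and let m_E : E ⊗ E → E be the unique morphism with (m_E ⊗ id_C) ≫ β = m_A ∘ (β ⊗ A) ∘ (E ⊗ λ) ∘ (E ⊗ β ⊗ C) ∘ (E ⊗ E ⊗ δ_C). Then (E, m_E, e_E) is a monoid in V: m_E ∘ (m_E ⊗ E) = m_E ∘ (E ⊗ m_E) and m_E ∘ (e_E ⊗ E) = id_E = m_E ∘ (E ⊗ e_E) (up to the unit isomorphisms). -/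
open CategoryTheory MonoidalCategory

universe v u

variable {V : Type u} [Category.{v} V] [MonoidalCategory V]

/-!
Representability identifies `W ⟶ E` with `W ⊗ C ⟶ A`, naturally in `W`. The entwining turns
the maps `W ⊗ C ⟶ A` into an associative and unital convolution algebra: `f ⋆ g` splits `C`
by `δ_C`, feeds one half to `g`, moves the result past the other half with `λ`, applies `f` and
multiplies; the unit is `e_A ∘ ε_C`. By construction `m_E` and `e_E` correspond to `β ⋆ β` and
to the unit, so the monoid laws of `E` are those of `⋆` transported along `β`. The heart of
associativity is that `g ↦ λ ∘ (g ⊗ C) ∘ (W ⊗ δ_C) : W ⊗ C ⟶ C ⊗ A` is compatible with `δ_C`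
(by coassociativity and the compatibility of `λ` with `δ_C`) and hence, via the compatibility of
`λ` with `m_A`, turns `⋆` into the evident product of such maps.
-/

open scoped MonObj ComonObj

namespace Entwining

section Lift

variable {A C : V} [ComonObj C] (lam : A ⊗ C ⟶ C ⊗ A)

def lift {W : V} (g : W ⊗ C ⟶ A) : W ⊗ C ⟶ C ⊗ A :=
  (W ◁ Δ) ≫ (α_ W C C).inv ≫ (g ▷ C) ≫ lam

variable {lam}

theorem lift_comp_comul_whiskerRight
    (h : (A ◁ Δ[C]) ≫ (α_ A C C).inv ≫ (lam ▷ C) ≫ (α_ C A C).hom ≫ (C ◁ lam) =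
      lam ≫ (Δ ▷ A) ≫ (α_ C C A).hom)
    {W : V} (g : W ⊗ C ⟶ A) :
    lift lam g ≫ (Δ ▷ A) = (W ◁ Δ) ≫ (α_ W C C).inv ≫ (lift lam g ▷ C) ≫ (α_ C A C).hom ≫
      (C ◁ lam) ≫ (α_ C C A).inv := by
  have h' : lam ≫ (Δ ▷ A) = (A ◁ Δ[C]) ≫ (α_ A C C).inv ≫ (lam ▷ C) ≫ (α_ C A C).hom ≫
      (C ◁ lam) ≫ (α_ C C A).inv := by
    simp [reassoc_of% h]
  simp only [lift, Category.assoc, h', ← whisker_exchange_assoc]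
  rw [← associator_inv_naturality_right_assoc, ← whiskerLeft_comp_assoc, ComonObj.comul_assoc]
  monoidal

theorem lift_comp_counit_whiskerRight
    (h : lam ≫ (ε[C] ▷ A) ≫ (λ_ A).hom = (A ◁ ε) ≫ (ρ_ A).hom) {W : V} (g : W ⊗ C ⟶ A) :
    lift lam g ≫ (ε ▷ A) ≫ (λ_ A).hom = g := by
  rw [lift, Category.assoc, Category.assoc, Category.assoc, h, ← whisker_exchange_assoc,
    ← associator_inv_naturality_right_assoc, ← whiskerLeft_comp_assoc, ComonObj.comul_counit]
  monoidal

theorem whiskerRight_comp_lift {W W' : V} (v : W ⟶ W') (g : W' ⊗ C ⟶ A) :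
    (v ▷ C) ≫ lift lam g = lift lam ((v ▷ C) ≫ g) := by
  rw [lift, lift, ← whisker_exchange_assoc, associator_inv_naturality_left_assoc,
    ← comp_whiskerRight_assoc]

end Lift

variable {A C : V} [MonObj A] [ComonObj C] (lam : A ⊗ C ⟶ C ⊗ A)

def convolution {W W' : V} (f : W ⊗ C ⟶ A) (g : W' ⊗ C ⟶ A) : (W ⊗ W') ⊗ C ⟶ A :=
  (α_ W W' C).hom ≫ (W ◁ lift lam g) ≫ (α_ W C A).inv ≫ (f ▷ A) ≫ μ

variable {lam}

theorem lift_convolution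
    (h₃ : (A ◁ Δ[C]) ≫ (α_ A C C).inv ≫ (lam ▷ C) ≫ (α_ C A C).hom ≫ (C ◁ lam) =
      lam ≫ (Δ ▷ A) ≫ (α_ C C A).hom)
    (h₄ : (μ[A] ▷ C) ≫ lam = (α_ A A C).hom ≫ (A ◁ lam) ≫ (α_ A C A).inv ≫
        (lam ▷ A) ≫ (α_ C A A).hom ≫ (C ◁ μ))
    {W W' : V} (f : W ⊗ C ⟶ A) (g : W' ⊗ C ⟶ A) :
    lift lam (convolution lam f g) = (α_ W W' C).hom ≫ (W ◁ lift lam g) ≫ (α_ W C A).inv ≫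
      (lift lam f ▷ A) ≫ (α_ C A A).hom ≫ (C ◁ μ) := by
  have hf : lift lam f ▷ A = ((W ◁ Δ) ▷ A) ≫ (((α_ W C C).inv ≫ (f ▷ C) ≫ lam) ▷ A) := by
    rw [lift, comp_whiskerRight]
  rw [hf, Category.assoc, ← associator_inv_naturality_middle_assoc, ← whiskerLeft_comp_assoc,
    lift_comp_comul_whiskerRight h₃]
  simp only [lift, convolution, comp_whiskerRight, Category.assoc, h₄]
  rw [associator_naturality_left_assoc, ← whisker_exchange_assoc]
  monoidal

theorem convolution_assoc
    (h₃ : (A ◁ Δ[C]) ≫ (α_ A C C).inv ≫ (lam ▷ C) ≫ (α_ C A C).hom ≫ (C ◁ lam) =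
      lam ≫ (Δ ▷ A) ≫ (α_ C C A).hom)
    (h₄ : (μ[A] ▷ C) ≫ lam = (α_ A A C).hom ≫ (A ◁ lam) ≫ (α_ A C A).inv ≫
        (lam ▷ A) ≫ (α_ C A A).hom ≫ (C ◁ μ))
    {W W' W'' : V} (f : W ⊗ C ⟶ A) (g : W' ⊗ C ⟶ A) (h : W'' ⊗ C ⟶ A) :
    ((α_ W W' W'').hom ▷ C) ≫ convolution lam f (convolution lam g h) =
      convolution lam (convolution lam f g) h := by
  rw [convolution, lift_convolution h₃ h₄]
  simp only [convolution, whiskerLeft_comp, comp_whiskerRight, Category.assoc, MonObj.mul_assoc]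
  rw [associator_inv_naturality_right_assoc, whisker_exchange_assoc]
  monoidal

theorem lift_unit (h₁ : (λ_ C).inv ≫ (η[A] ▷ C) ≫ lam = (ρ_ C).inv ≫ (C ◁ η)) :
    lift lam ((λ_ C).hom ≫ ε ≫ η) = (λ_ C).hom ≫ (ρ_ C).inv ≫ (C ◁ η) := by
  have h₁' : (η[A] ▷ C) ≫ lam = (λ_ C).hom ≫ (ρ_ C).inv ≫ (C ◁ η) := by
    rw [← h₁, Iso.hom_inv_id_assoc]
  have hΔ : (𝟙_ V ◁ Δ[C]) ≫ (α_ _ C C).inv ≫ ((λ_ C).hom ▷ C) = (λ_ C).hom ≫ Δ := by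
    monoidal
  simp only [lift, comp_whiskerRight, Category.assoc, h₁', reassoc_of% hΔ,
    ComonObj.counit_comul_assoc, Iso.inv_hom_id_assoc]

theorem unit_convolution
    (h₂ : lam ≫ (ε[C] ▷ A) ≫ (λ_ A).hom = (A ◁ ε) ≫ (ρ_ A).hom) {W : V} (f : W ⊗ C ⟶ A) :
    convolution lam ((λ_ C).hom ≫ ε ≫ η) f = ((λ_ W).hom ▷ C) ≫ f := by
  have hcoh : (α_ (𝟙_ V) W C).hom ≫ (𝟙_ V ◁ lift lam f) ≫ (α_ (𝟙_ V) C A).inv ≫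
      ((λ_ C).hom ▷ A) = ((λ_ W).hom ▷ C) ≫ lift lam f := by
    monoidal
  simp only [convolution, comp_whiskerRight, Category.assoc, MonObj.one_mul, reassoc_of% hcoh,
    lift_comp_counit_whiskerRight h₂]

theorem convolution_unit (h₁ : (λ_ C).inv ≫ (η[A] ▷ C) ≫ lam = (ρ_ C).inv ≫ (C ◁ η))
    {W : V} (f : W ⊗ C ⟶ A) :
    convolution lam f ((λ_ C).hom ≫ ε ≫ η) = ((ρ_ W).hom ▷ C) ≫ f := by
  simp only [convolution, lift_unit h₁, whiskerLeft_comp, Category.assoc]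
  rw [associator_inv_naturality_right_assoc, whisker_exchange_assoc, MonObj.mul_one]
  monoidal

theorem whiskerRight_whiskerRight_comp_convolution {W₁ W₂ W' : V} (u : W₁ ⟶ W₂)
    (f : W₂ ⊗ C ⟶ A) (g : W' ⊗ C ⟶ A) :
    ((u ▷ W') ▷ C) ≫ convolution lam f g = convolution lam ((u ▷ C) ≫ f) g := by
  simp only [convolution, comp_whiskerRight, Category.assoc, associator_naturality_left_assoc,
    ← whisker_exchange_assoc, associator_inv_naturality_left_assoc]

theorem whiskerLeft_whiskerRight_comp_convolution {W W'₁ W'₂ : V} (v : W'₁ ⟶ W'₂)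
    (f : W ⊗ C ⟶ A) (g : W'₂ ⊗ C ⟶ A) :
    ((W ◁ v) ▷ C) ≫ convolution lam f g = convolution lam f ((v ▷ C) ≫ g) := by
  simp only [convolution, associator_naturality_middle_assoc, ← whiskerLeft_comp_assoc,
    whiskerRight_comp_lift]

end Entwining

/-- **Proposition 6.3(i).** Let `(A, C, λ)` be an entwining in a monoidal category `V`,
and suppose it is representable, with representing object `E` and structural
morphism `β : E ⊗ C ⟶ A` (so every `f : V' ⊗ C ⟶ A` factors uniquely through
`β` via some `g : V' ⟶ E`).  Let `e_E : 𝟙 ⟶ E` be the unique morphism with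
`(e_E ⊗ C) ≫ β = e_A ∘ ε_C` and `m_E : E ⊗ E ⟶ E` the unique morphism with
`(m_E ⊗ C) ≫ β = m_A ∘ (β ⊗ A) ∘ (E ⊗ λ) ∘ (E ⊗ β ⊗ C) ∘ (E ⊗ E ⊗ δ_C)`.
Then `(E, m_E, e_E)` is a monoid in `V`. -/
theorem representable_entwining_monoid
    (M : Mon V) (Cn : Comon V) (lam : M.X ⊗ Cn.X ⟶ Cn.X ⊗ M.X)
    (e₁ : (λ_ Cn.X).inv ≫ (M.mon.one ▷ Cn.X) ≫ lam = (ρ_ Cn.X).inv ≫ (Cn.X ◁ M.mon.one))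
    (e₂ : lam ≫ (Cn.comon.counit ▷ M.X) ≫ (λ_ M.X).hom = (M.X ◁ Cn.comon.counit) ≫ (ρ_ M.X).hom)
    (e₃ : (M.X ◁ Cn.comon.comul) ≫ (α_ M.X Cn.X Cn.X).inv ≫ (lam ▷ Cn.X) ≫
        (α_ Cn.X M.X Cn.X).hom ≫ (Cn.X ◁ lam) =
      lam ≫ (Cn.comon.comul ▷ M.X) ≫ (α_ Cn.X Cn.X M.X).hom)
    (e₄ : (M.mon.mul ▷ Cn.X) ≫ lam =
      (α_ M.X M.X Cn.X).hom ≫ (M.X ◁ lam) ≫ (α_ M.X Cn.X M.X).inv ≫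
        (lam ▷ M.X) ≫ (α_ Cn.X M.X M.X).hom ≫ (Cn.X ◁ M.mon.mul))
    (E : V) (β : E ⊗ Cn.X ⟶ M.X)
    (hrep : ∀ (W : V) (f : W ⊗ Cn.X ⟶ M.X), ∃! g : W ⟶ E, (g ▷ Cn.X) ≫ β = f)
    (eE : 𝟙_ V ⟶ E)
    (heE : (eE ▷ Cn.X) ≫ β = (λ_ Cn.X).hom ≫ Cn.comon.counit ≫ M.mon.one)
    (mE : E ⊗ E ⟶ E)
    (hmE : (mE ▷ Cn.X) ≫ β =
      (α_ E E Cn.X).hom ≫ (E ◁ (E ◁ Cn.comon.comul)) ≫ (E ◁ (α_ E Cn.X Cn.X).inv) ≫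
        (E ◁ (β ▷ Cn.X)) ≫ (E ◁ lam) ≫ (α_ E Cn.X M.X).inv ≫
          (β ▷ M.X) ≫ M.mon.mul) :
    (mE ▷ E) ≫ mE = (α_ E E E).hom ≫ (E ◁ mE) ≫ mE ∧
    (eE ▷ E) ≫ mE = (λ_ E).hom ∧
    (E ◁ eE) ≫ mE = (ρ_ E).hom := by
  open Entwining in
  have inj : ∀ {W : V} {f g : W ⟶ E}, (f ▷ Cn.X) ≫ β = (g ▷ Cn.X) ≫ β → f = g :=
    fun h => (hrep _ _).unique h rfl
  have hm : (mE ▷ Cn.X) ≫ β = convolution lam β β := by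
    simpa only [convolution, lift, whiskerLeft_comp, Category.assoc] using hmE
  refine ⟨inj ?_, inj ?_, inj ?_⟩
  · simp only [comp_whiskerRight, Category.assoc, hm, whiskerRight_whiskerRight_comp_convolution,
      whiskerLeft_whiskerRight_comp_convolution, convolution_assoc e₃ e₄]
  · rw [comp_whiskerRight, Category.assoc, hm, whiskerRight_whiskerRight_comp_convolution, heE,
      unit_convolution e₂]
  · rw [comp_whiskerRight, Category.assoc, hm, whiskerLeft_whiskerRight_comp_convolution, heE,
      convolution_unit e₁]
end

section
/- Let (A, C, λ) be a representable entwining in a monoidal category V, with representing object E, structural morphism β : E ⊗ C → A, and monoid structure (E, m_E, e_E) determined by (e_E ⊗ id_C) ≫ β = e_A ∘ ε_C and (m_E ⊗ id_C) ≫ β = m_A ∘ (β ⊗ A) ∘ (E ⊗ λ) ∘ (E ⊗ β ⊗ C) ∘ (E ⊗ E ⊗ δ_C). Let i : A → E be the unique morphism with (i ⊗ id_C) ≫ β = A ⊗ ε_C (composed with the unit isomorphism). Then i is a morphism of monoids: i ∘ e_A = e_E and m_E ∘ (i ⊗ i) = i ∘ m_A. -/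
/-!
By representability, morphisms into `E` are determined by their composites with `β`, so both
identities can be checked after applying `(- ▷ C) ≫ β`. For the unit this is immediate. For the
product, the counit law of `C` gives `(i ▷ C) ≫ (E ◁ δ) ≫ α⁻¹ ≫ (β ▷ C) = 𝟙`, which collapses the
defining formula of `m_E` on `i ⊗ i` to `(A ◁ (λ ≫ (ε ▷ A))) ≫ m_A`; the counit axiom of the
entwining turns this into `(m_A ▷ C) ≫ (A ◁ ε)`, which is the image of `m_A ≫ i`.
-/

open CategoryTheory MonoidalCategory

universe v u

variable {V : Type u} [Category.{v} V] [MonoidalCategory V]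

namespace RepresentableEntwining

variable {A C E : V}

theorem ext_of_represents (β : E ⊗ C ⟶ A)
    (hrep : ∀ (W : V) (f : W ⊗ C ⟶ A), ∃! g : W ⟶ E, (g ▷ C) ≫ β = f)
    {W : V} {f g : W ⟶ E} (h : (f ▷ C) ≫ β = (g ▷ C) ≫ β) : f = g :=
  (hrep W _).unique h rfl

variable [ComonObj C] {β : E ⊗ C ⟶ A} {i : A ⟶ E}

theorem whiskerRight_comul_comp_eq_id
    (hi : (i ▷ C) ≫ β = (A ◁ ComonObj.counit) ≫ (ρ_ A).hom) :
    (i ▷ C) ≫ (E ◁ ComonObj.comul) ≫ (α_ E C C).inv ≫ (β ▷ C) = 𝟙 (A ⊗ C) := by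
  rw [← whisker_exchange_assoc, associator_inv_naturality_left_assoc,
    ← comp_whiskerRight, hi, comp_whiskerRight,
    ← associator_inv_naturality_middle_assoc, ← MonoidalCategory.whiskerLeft_comp_assoc,
    ComonObj.counit_comul]
  simp

theorem one_comp_whiskerRight_comp [MonObj A]
    (hi : (i ▷ C) ≫ β = (A ◁ ComonObj.counit) ≫ (ρ_ A).hom) :
    ((MonObj.one ≫ i) ▷ C) ≫ β = (λ_ C).hom ≫ ComonObj.counit ≫ MonObj.one := by
  rw [comp_whiskerRight, Category.assoc, hi, ← whisker_exchange_assoc]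
  simp [unitors_inv_equal]

variable (β) in
/-- The product `m_E` of `E` is defined by `(m_E ▷ C) ≫ β = mulRep β lam`. -/
def mulRep [MonObj A] (lam : A ⊗ C ⟶ C ⊗ A) : (E ⊗ E) ⊗ C ⟶ A :=
  (α_ E E C).hom ≫ (E ◁ (E ◁ ComonObj.comul)) ≫ (E ◁ (α_ E C C).inv) ≫ (E ◁ (β ▷ C)) ≫
    (E ◁ lam) ≫ (α_ E C A).inv ≫ (β ▷ A) ≫ MonObj.mul

theorem tensorHom_whiskerRight_comp_mulRep [MonObj A] {lam : A ⊗ C ⟶ C ⊗ A}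
    (hlam : lam ≫ (ComonObj.counit ▷ A) ≫ (λ_ A).hom = (A ◁ ComonObj.counit) ≫ (ρ_ A).hom)
    (hi : (i ▷ C) ≫ β = (A ◁ ComonObj.counit) ≫ (ρ_ A).hom) :
    ((i ⊗ₘ i) ▷ C) ≫ mulRep β lam = (MonObj.mul ▷ C) ≫ (A ◁ ComonObj.counit) ≫ (ρ_ A).hom := by
  calc ((i ⊗ₘ i) ▷ C) ≫ mulRep β lam
      = (α_ A A C).hom ≫ (A ◁ ((i ▷ C) ≫ (E ◁ ComonObj.comul) ≫ (α_ E C C).inv ≫ (β ▷ C) ≫ lam)) ≫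
          (i ▷ (C ⊗ A)) ≫ (α_ E C A).inv ≫ (β ▷ A) ≫ MonObj.mul := by
        rw [mulRep, MonoidalCategory.tensorHom_def]
        simp only [comp_whiskerRight, Category.assoc, whisker_assoc]
        rw [associator_naturality_left_assoc]
        simp only [Iso.inv_hom_id_assoc, ← whisker_exchange_assoc]
        rw [← MonoidalCategory.whiskerLeft_comp_assoc, ← whisker_exchange,
          MonoidalCategory.whiskerLeft_comp_assoc]
        simp only [MonoidalCategory.whiskerLeft_comp, Category.assoc]
    _ = (α_ A A C).hom ≫ (A ◁ (lam ≫ (ComonObj.counit ▷ A) ≫ (λ_ A).hom)) ≫ MonObj.mul := by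
        rw [reassoc_of% whiskerRight_comul_comp_eq_id hi, associator_inv_naturality_left_assoc,
          ← comp_whiskerRight_assoc, hi, comp_whiskerRight, Category.assoc,
          ← associator_inv_naturality_middle_assoc]
        simp [MonoidalCategory.whiskerLeft_comp]
    _ = (MonObj.mul ▷ C) ≫ (A ◁ ComonObj.counit) ≫ (ρ_ A).hom := by
        rw [hlam, ← whisker_exchange_assoc]
        simp

end RepresentableEntwining

open RepresentableEntwining

theorem representable_entwining_algebra_map_general
    (M : Mon V) (Cn : Comon V) (lam : M.X ⊗ Cn.X ⟶ Cn.X ⊗ M.X)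
    (e₂ : lam ≫ ((ComonObj.counit (X := Cn.X)) ▷ M.X) ≫ (λ_ M.X).hom = (M.X ◁ (ComonObj.counit (X := Cn.X))) ≫ (ρ_ M.X).hom)
    (E : V) (β : E ⊗ Cn.X ⟶ M.X)
    (hrep : ∀ (W : V) (f : W ⊗ Cn.X ⟶ M.X), ∃! g : W ⟶ E, (g ▷ Cn.X) ≫ β = f)
    (eE : 𝟙_ V ⟶ E)
    (heE : (eE ▷ Cn.X) ≫ β = (λ_ Cn.X).hom ≫ (ComonObj.counit (X := Cn.X)) ≫ (MonObj.one (X := M.X)))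
    (mE : E ⊗ E ⟶ E)
    (hmE : (mE ▷ Cn.X) ≫ β =
      (α_ E E Cn.X).hom ≫ (E ◁ (E ◁ (ComonObj.comul (X := Cn.X)))) ≫ (E ◁ (α_ E Cn.X Cn.X).inv) ≫
        (E ◁ (β ▷ Cn.X)) ≫ (E ◁ lam) ≫ (α_ E Cn.X M.X).inv ≫
          (β ▷ M.X) ≫ (MonObj.mul (X := M.X)))
    (i : M.X ⟶ E)
    (hi : (i ▷ Cn.X) ≫ β = (M.X ◁ (ComonObj.counit (X := Cn.X))) ≫ (ρ_ M.X).hom) :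
    (MonObj.one (X := M.X)) ≫ i = eE ∧ (i ⊗ₘ i) ≫ mE = (MonObj.mul (X := M.X)) ≫ i := by
  refine ⟨ext_of_represents β hrep ((one_comp_whiskerRight_comp hi).trans heE.symm),
    ext_of_represents β hrep ?_⟩
  rw [comp_whiskerRight, Category.assoc, hmE, comp_whiskerRight, Category.assoc, hi]
  exact tensorHom_whiskerRight_comp_mulRep e₂ hi

/-- **Proposition 6.3(ii).** Let `(A, C, λ)` be a representable entwining in a
monoidal category `V`, with representing object `E`, structural morphism
`β : E ⊗ C ⟶ A`, and monoid structure `(E, m_E, e_E)` determined by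
`(e_E ⊗ C) ≫ β = e_A ∘ ε_C` and
`(m_E ⊗ C) ≫ β = m_A ∘ (β ⊗ A) ∘ (E ⊗ λ) ∘ (E ⊗ β ⊗ C) ∘ (E ⊗ E ⊗ δ_C)`.
Let `i : A ⟶ E` be the unique morphism with `(i ⊗ C) ≫ β = A ⊗ ε_C`.  Then
`i` is a morphism of monoids: `i ∘ e_A = e_E` and `m_E ∘ (i ⊗ i) = i ∘ m_A`. -/
theorem representable_entwining_algebra_map
    (M : Mon V) (Cn : Comon V) (lam : M.X ⊗ Cn.X ⟶ Cn.X ⊗ M.X)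
    (e₁ : (λ_ Cn.X).inv ≫ ((MonObj.one (X := M.X)) ▷ Cn.X) ≫ lam = (ρ_ Cn.X).inv ≫ (Cn.X ◁ (MonObj.one (X := M.X))))
    (e₂ : lam ≫ ((ComonObj.counit (X := Cn.X)) ▷ M.X) ≫ (λ_ M.X).hom = (M.X ◁ (ComonObj.counit (X := Cn.X))) ≫ (ρ_ M.X).hom)
    (e₃ : (M.X ◁ (ComonObj.comul (X := Cn.X))) ≫ (α_ M.X Cn.X Cn.X).inv ≫ (lam ▷ Cn.X) ≫
        (α_ Cn.X M.X Cn.X).hom ≫ (Cn.X ◁ lam) =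
      lam ≫ ((ComonObj.comul (X := Cn.X)) ▷ M.X) ≫ (α_ Cn.X Cn.X M.X).hom)
    (e₄ : ((MonObj.mul (X := M.X)) ▷ Cn.X) ≫ lam =
      (α_ M.X M.X Cn.X).hom ≫ (M.X ◁ lam) ≫ (α_ M.X Cn.X M.X).inv ≫
        (lam ▷ M.X) ≫ (α_ Cn.X M.X M.X).hom ≫ (Cn.X ◁ (MonObj.mul (X := M.X))))
    (E : V) (β : E ⊗ Cn.X ⟶ M.X)
    (hrep : ∀ (W : V) (f : W ⊗ Cn.X ⟶ M.X), ∃! g : W ⟶ E, (g ▷ Cn.X) ≫ β = f)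
    (eE : 𝟙_ V ⟶ E)
    (heE : (eE ▷ Cn.X) ≫ β = (λ_ Cn.X).hom ≫ (ComonObj.counit (X := Cn.X)) ≫ (MonObj.one (X := M.X)))
    (mE : E ⊗ E ⟶ E)
    (hmE : (mE ▷ Cn.X) ≫ β =
      (α_ E E Cn.X).hom ≫ (E ◁ (E ◁ (ComonObj.comul (X := Cn.X)))) ≫ (E ◁ (α_ E Cn.X Cn.X).inv) ≫
        (E ◁ (β ▷ Cn.X)) ≫ (E ◁ lam) ≫ (α_ E Cn.X M.X).inv ≫
          (β ▷ M.X) ≫ (MonObj.mul (X := M.X)))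
    (i : M.X ⟶ E)
    (hi : (i ▷ Cn.X) ≫ β = (M.X ◁ (ComonObj.counit (X := Cn.X))) ≫ (ρ_ M.X).hom) :
    (MonObj.one (X := M.X)) ≫ i = eE ∧ (i ⊗ₘ i) ≫ mE = (MonObj.mul (X := M.X)) ≫ i :=
  representable_entwining_algebra_map_general M Cn lam e₂ E β hrep eE heE mE hmE i hi
end
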